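/- arXiv:0911.1460 — 3 statements merged into one kernel-verified Lean document; each statement's English description precedes it below -/
import Mathlib

section
/- Let (V, ω) be a finite dimensional symplectic vector space and W, W' ⊆ V coisotropic subspaces with dim W' = dim W and W + (W')^ω = V. Set U := W ∩ W'. Then U + W^ω = W, i.e. the natural linear map U → W/W^ω, v ↦ [v], is surjective; combined with U ∩ W^ω = {0} it is bijective. -/
/-!
A vector of `W^ω ∩ W'` is `ω`-orthogonal to `W` and to `W'^ω`, hence to `W + W'^ω = V`, so it
vanishes; a fortiori `U ∩ W^ω = 0`. Since `W + W' ⊇ W + W'^ω = V`, we get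
`dim U = dim W + dim W' - dim V`, and `dim W^ω = dim V - dim W`, so
`dim (U + W^ω) = dim W' = dim W`: the subspace `U + W^ω ⊆ W` is all of `W`.
-/

/-- The symplectic complement `W^ω = {v ∈ V | ω(v,w) = 0 for all w ∈ W}`. -/
def symplCompl {V : Type*} [AddCommGroup V] [Module ℝ V]
    (ω : V →ₗ[ℝ] V →ₗ[ℝ] ℝ) (W : Submodule ℝ V) : Submodule ℝ V where
  carrier := {v | ∀ w ∈ W, ω v w = 0}
  add_mem' := by
    intro a b ha hb w hw
    simp [map_add, LinearMap.add_apply, ha w hw, hb w hw]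
  zero_mem' := by
    intro w hw
    simp
  smul_mem' := by
    intro c a ha w hw
    simp [map_smul, LinearMap.smul_apply, ha w hw]

open Module Submodule LinearMap

section
variable {V : Type*} [AddCommGroup V] [Module ℝ V] {ω : V →ₗ[ℝ] V →ₗ[ℝ] ℝ}

lemma symplCompl_eq_orthogonal (hω : ω.IsAlt) (W : Submodule ℝ V) :
    symplCompl ω W = BilinForm.orthogonal ω W := by
  ext v
  exact forall₂_congr fun w _ => BilinForm.IsRefl.eq_iff hω.isRefl

lemma finrank_symplCompl_add_finrank [FiniteDimensional ℝ V] (hω : ω.IsAlt)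
    (hω' : ω.SeparatingLeft) (W : Submodule ℝ V) :
    finrank ℝ (symplCompl ω W) + finrank ℝ W = finrank ℝ V := by
  rw [symplCompl_eq_orthogonal hω W,
    BilinForm.finrank_orthogonal (hω.isRefl.nondegenerate_iff_separatingLeft.2 hω')]
  have := W.finrank_le
  omega

lemma symplCompl_inf_eq_bot_of_sup_symplCompl_eq_top (hω : ω.IsAlt) (hω' : ω.SeparatingLeft)
    {W W' : Submodule ℝ V} (h : W ⊔ symplCompl ω W' = ⊤) :
    symplCompl ω W ⊓ W' = ⊥ := by
  refine eq_bot_iff.2 fun x ⟨hxW, hxW'⟩ => hω' x fun v => ?_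
  obtain ⟨w, hw, y, hy, rfl⟩ := mem_sup.1 (h ▸ mem_top : v ∈ W ⊔ symplCompl ω W')
  rw [map_add, hxW w hw, zero_add]
  exact hω.isRefl _ _ (hy x hxW')

lemma finrank_inf_add_finrank_symplCompl [FiniteDimensional ℝ V] (hω : ω.IsAlt)
    (hω' : ω.SeparatingLeft) {W W' : Submodule ℝ V} (h : W ⊔ W' = ⊤) :
    finrank ℝ ↥(W ⊓ W') + finrank ℝ (symplCompl ω W) = finrank ℝ W' := by
  have hsup := finrank_sup_add_finrank_inf_eq W W'
  rw [h, finrank_top] at hsup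
  have := finrank_symplCompl_add_finrank hω hω' W
  omega

end

/-- Let `(V, ω)` be a finite dimensional symplectic vector space and `W, W' ⊆ V`
coisotropic subspaces with `dim W' = dim W` and `W + (W')^ω = V`.  Set `U := W ∩ W'`.
Then `U + W^ω = W`; combined with `U ∩ W^ω = {0}` the natural map `U → W/W^ω` is
bijective. -/
theorem stmt3 {V : Type*} [AddCommGroup V] [Module ℝ V] [FiniteDimensional ℝ V]
    (ω : V →ₗ[ℝ] V →ₗ[ℝ] ℝ)
    (halt : ∀ v : V, ω v v = 0)
    (hnondeg : ∀ v : V, (∀ w : V, ω v w = 0) → v = 0)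
    (W W' : Submodule ℝ V)
    (hW : symplCompl ω W ≤ W) (hW' : symplCompl ω W' ≤ W')
    (hdim : Module.finrank ℝ W' = Module.finrank ℝ W)
    (hsum : W ⊔ symplCompl ω W' = ⊤) :
    (W ⊓ W') ⊔ symplCompl ω W = W ∧ (W ⊓ W') ⊓ symplCompl ω W = ⊥ := by
  have hdisj : (W ⊓ W') ⊓ symplCompl ω W = ⊥ :=
    eq_bot_iff.2 <| (le_inf inf_le_right (inf_le_left.trans inf_le_right)).trans
      (symplCompl_inf_eq_bot_of_sup_symplCompl_eq_top halt hnondeg hsum).le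
  have hcodisj : W ⊔ W' = ⊤ := top_unique (hsum ▸ sup_le_sup_left hW' W)
  have hrank := finrank_inf_add_finrank_symplCompl halt hnondeg hcodisj
  refine ⟨eq_of_le_of_finrank_le (sup_le inf_le_left hW) ?_, hdisj⟩
  have hsup := finrank_sup_add_finrank_inf_eq (W ⊓ W') (symplCompl ω W)
  rw [hdisj, finrank_bot] at hsup
  omega
end

section
/- Let (V, ω) be a finite dimensional symplectic vector space, W, W' ⊆ V coisotropic subspaces with dim W' = dim W and W + (W')^ω = V, and set U := W ∩ W'. Then U is a symplectic subspace of V (i.e., the restriction ω|_U is nondegenerate). -/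
/-!
Write `U = W ∩ W'`. For a nondegenerate reflexive form, taking complements is an
order-reversing involution, so `U^ω = W^ω + W'^ω`. A dimension count turns `dim W' = dim W`
and `W + W'^ω = V` into `W ∩ W'^ω = 0`, and with `W^ω ⊆ W` the modular law gives
`W ∩ U^ω = W^ω`. Hence `U ∩ U^ω = W' ∩ W^ω`, and a vector there is `ω`-orthogonal to
`W + W'^ω = V`, so it vanishes.
-/

section SymplecticComplement

variable {V : Type*} [AddCommGroup V] [Module ℝ V] {ω : V →ₗ[ℝ] V →ₗ[ℝ] ℝ}

theorem symplCompl_eq_orthogonal_flip (W : Submodule ℝ V) :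
    symplCompl ω W = LinearMap.BilinForm.orthogonal ω.flip W :=
  rfl

theorem symplCompl_sup (S T : Submodule ℝ V) :
    symplCompl ω (S ⊔ T) = symplCompl ω S ⊓ symplCompl ω T := by
  refine le_antisymm (le_inf (fun v hv w hw => hv w (Submodule.mem_sup_left hw))
    fun v hv w hw => hv w (Submodule.mem_sup_right hw)) ?_
  rintro v ⟨hvS, hvT⟩ _ hw
  obtain ⟨s, hs, t, ht, rfl⟩ := Submodule.mem_sup.mp hw
  rw [map_add, hvS s hs, hvT t ht, add_zero]

theorem symplCompl_top (hsep : ω.SeparatingLeft) : symplCompl ω ⊤ = ⊥ :=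
  eq_bot_iff.mpr fun v hv => hsep v fun w => hv w Submodule.mem_top

variable [FiniteDimensional ℝ V]

theorem finrank_add_finrank_symplCompl (hnd : ω.Nondegenerate) (W : Submodule ℝ V) :
    Module.finrank ℝ W + Module.finrank ℝ (symplCompl ω W) = Module.finrank ℝ V := by
  rw [symplCompl_eq_orthogonal_flip,
    LinearMap.BilinForm.finrank_orthogonal (LinearMap.flip_nondegenerate.mpr hnd)]
  have := W.finrank_le
  omega

theorem symplCompl_symplCompl (hrefl : ω.IsRefl) (hnd : ω.Nondegenerate) (W : Submodule ℝ V) :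
    symplCompl ω (symplCompl ω W) = W :=
  LinearMap.BilinForm.orthogonal_orthogonal (LinearMap.flip_nondegenerate.mpr hnd)
    (LinearMap.IsRefl.flip_isRefl_iff.mpr hrefl) W

theorem symplCompl_inf (hrefl : ω.IsRefl) (hnd : ω.Nondegenerate) (S T : Submodule ℝ V) :
    symplCompl ω (S ⊓ T) = symplCompl ω S ⊔ symplCompl ω T := by
  conv_lhs => rw [← symplCompl_symplCompl hrefl hnd S, ← symplCompl_symplCompl hrefl hnd T,
    ← symplCompl_sup, symplCompl_symplCompl hrefl hnd]

theorem inf_symplCompl_eq_bot_of_finrank_eq (hnd : ω.Nondegenerate) {S T : Submodule ℝ V}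
    (hdim : Module.finrank ℝ T = Module.finrank ℝ S) (hsum : S ⊔ symplCompl ω T = ⊤) :
    S ⊓ symplCompl ω T = ⊥ := by
  rw [← Submodule.finrank_eq_zero (R := ℝ)]
  have hsup := Submodule.finrank_sup_add_finrank_inf_eq S (symplCompl ω T)
  rw [hsum, finrank_top] at hsup
  have := finrank_add_finrank_symplCompl hnd T
  omega

theorem symplCompl_inf_eq_bot_of_sup_eq_top (hrefl : ω.IsRefl) (hnd : ω.Nondegenerate)
    {S T : Submodule ℝ V} (hsum : S ⊔ symplCompl ω T = ⊤) :
    symplCompl ω S ⊓ T = ⊥ := by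
  rw [← symplCompl_symplCompl hrefl hnd T, ← symplCompl_sup, hsum, symplCompl_top hnd.1]

end SymplecticComplement

theorem stmt4_general {V : Type*} [AddCommGroup V] [Module ℝ V] [FiniteDimensional ℝ V]
    (ω : V →ₗ[ℝ] V →ₗ[ℝ] ℝ)
    (halt : ∀ v : V, ω v v = 0)
    (hnondeg : ∀ v : V, (∀ w : V, ω v w = 0) → v = 0)
    (W W' : Submodule ℝ V)
    (hW : symplCompl ω W ≤ W)
    (hdim : Module.finrank ℝ W' = Module.finrank ℝ W)
    (hsum : W ⊔ symplCompl ω W' = ⊤) :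
    (W ⊓ W') ⊓ symplCompl ω (W ⊓ W') = ⊥ := by
  have hrefl : ω.IsRefl := LinearMap.IsAlt.isRefl halt
  have hnd : ω.Nondegenerate := hrefl.nondegenerate_iff_separatingLeft.mpr hnondeg
  rw [symplCompl_inf hrefl hnd]
  calc W ⊓ W' ⊓ (symplCompl ω W ⊔ symplCompl ω W')
      = W' ⊓ ((symplCompl ω W ⊔ symplCompl ω W') ⊓ W) := by
        rw [inf_comm W, inf_assoc, inf_comm W]
    _ = W' ⊓ symplCompl ω W := by
        rw [sup_inf_assoc_of_le _ hW, inf_comm _ W,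
          inf_symplCompl_eq_bot_of_finrank_eq hnd hdim hsum, sup_bot_eq]
    _ = ⊥ := by rw [inf_comm, symplCompl_inf_eq_bot_of_sup_eq_top hrefl hnd hsum]

/-- Let `(V, ω)` be a finite dimensional symplectic vector space, `W, W' ⊆ V`
coisotropic subspaces with `dim W' = dim W` and `W + (W')^ω = V`, and set
`U := W ∩ W'`.  Then `U` is a symplectic subspace of `V`, i.e. `U ∩ U^ω = {0}`
(the restriction of `ω` to `U` is nondegenerate). -/
theorem stmt4 {V : Type*} [AddCommGroup V] [Module ℝ V] [FiniteDimensional ℝ V]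
    (ω : V →ₗ[ℝ] V →ₗ[ℝ] ℝ)
    (halt : ∀ v : V, ω v v = 0)
    (hnondeg : ∀ v : V, (∀ w : V, ω v w = 0) → v = 0)
    (W W' : Submodule ℝ V)
    (hW : symplCompl ω W ≤ W) (hW' : symplCompl ω W' ≤ W')
    (hdim : Module.finrank ℝ W' = Module.finrank ℝ W)
    (hsum : W ⊔ symplCompl ω W' = ⊤) :
    (W ⊓ W') ⊓ symplCompl ω (W ⊓ W') = ⊥ :=
  stmt4_general ω halt hnondeg W W' hW hdim hsum
end

section
/- Let (V, ω) be a finite dimensional symplectic vector space, V = V₀ ⊕ V₁ ⊕ V₂ a direct sum decomposition, and Ψ a symplectic automorphism of (V, ω) that, with respect to this splitting, has block form Ψ = [[Ψ₀₀, 0, Ψ₀₂], [Ψ₁₀, Ψ₁₁, Ψ₁₂], [0, 0, Ψ₂₂]]. Assume ω vanishes on V₀ × V₁, on V₁ × V₁, on V₀ × V₂ (pairing within the relevant blocks) so that for v₀ ∈ V₀, w₂ ∈ V₂: ω(Ψ₀₀v₀, Ψ₀₂w₂) + ω(Ψ₁₀v₀, Ψ₂₂w₂) = 0, and for v₂, w₂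 ∈ V₂: ω(Ψ₀₂v₂, Ψ₀₂w₂) + ω(Ψ₁₂v₂, Ψ₂₂w₂) + ω(Ψ₂₂v₂, Ψ₁₂w₂) = 0. Then for every t ∈ ℝ the map Ψ^t := [[Ψ₀₀, 0, tΨ₀₂], [tΨ₁₀, Ψ₁₁, t²Ψ₁₂], [0, 0, Ψ₂₂]] is also a symplectic automorphism of (V, ω). -/
/-!
Expanding `ω` along `V₀ ⊕ V₁ ⊕ V₂` with the isotropy relations leaves only the pairings
`V₀ × V₀`, `V₁ × V₂`, `V₂ × V₁` and `V₂ × V₂`. Hence `ω(Ψ^t v, Ψ^t w)` is a quadratic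
polynomial in `t` whose linear and quadratic coefficients are exactly the two given identities,
so it does not depend on `t`. Its value at `t = 1` is `ω(v, w)` because `Ψ = Ψ^1` is symplectic.
Bijectivity follows since a linear endomorphism preserving a nondegenerate form is injective.
-/

/-- The block-triangular map `Ψ^t` on `V₀ ⊕ V₁ ⊕ V₂` with blocks
`[[Ψ₀₀, 0, tΨ₀₂], [tΨ₁₀, Ψ₁₁, t²Ψ₁₂], [0, 0, Ψ₂₂]]`. -/
def blockMap {V₀ V₁ V₂ : Type*} [AddCommGroup V₀] [Module ℝ V₀]
    [AddCommGroup V₁] [Module ℝ V₁] [AddCommGroup V₂] [Module ℝ V₂]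
    (Ψ₀₀ : V₀ →ₗ[ℝ] V₀) (Ψ₀₂ : V₂ →ₗ[ℝ] V₀) (Ψ₁₀ : V₀ →ₗ[ℝ] V₁)
    (Ψ₁₁ : V₁ →ₗ[ℝ] V₁) (Ψ₁₂ : V₂ →ₗ[ℝ] V₁) (Ψ₂₂ : V₂ →ₗ[ℝ] V₂)
    (t : ℝ) : V₀ × V₁ × V₂ → V₀ × V₁ × V₂ :=
  fun v => (Ψ₀₀ v.1 + t • Ψ₀₂ v.2.2,
            (t • Ψ₁₀ v.1 + Ψ₁₁ v.2.1 + t ^ 2 • Ψ₁₂ v.2.2, Ψ₂₂ v.2.2))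

section Expansion

variable (R : Type*) {V₀ V₁ V₂ : Type*} [CommRing R] [AddCommGroup V₀] [Module R V₀]
  [AddCommGroup V₁] [Module R V₁] [AddCommGroup V₂] [Module R V₂]

-- `ι₀ R a` unfolds to `(a, 0, 0)`, so hypotheses written with such tuples apply as they stand.
def ι₀ : V₀ →ₗ[R] V₀ × V₁ × V₂ := LinearMap.inl R V₀ (V₁ × V₂)

def ι₁ : V₁ →ₗ[R] V₀ × V₁ × V₂ := (LinearMap.inr R V₀ (V₁ × V₂)).comp (LinearMap.inl R V₁ V₂)

def ι₂ : V₂ →ₗ[R] V₀ × V₁ × V₂ := (LinearMap.inr R V₀ (V₁ × V₂)).comp (LinearMap.inr R V₁ V₂)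

theorem eq_ι₀_add_ι₁_add_ι₂ (x : V₀ × V₁ × V₂) : x = ι₀ R x.1 + ι₁ R x.2.1 + ι₂ R x.2.2 := by
  ext <;> simp [ι₀, ι₁, ι₂]

variable {R} {ω : (V₀ × V₁ × V₂) →ₗ[R] (V₀ × V₁ × V₂) →ₗ[R] R}

theorem LinearMap.IsAlt.apply_eq_sum_blocks (hω : ω.IsAlt)
    (h01 : ∀ a b, ω (ι₀ R a) (ι₁ R b) = 0) (h11 : ∀ a b, ω (ι₁ R a) (ι₁ R b) = 0)
    (h02 : ∀ a b, ω (ι₀ R a) (ι₂ R b) = 0) (x y : V₀ × V₁ × V₂) :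
    ω x y = ω (ι₀ R x.1) (ι₀ R y.1) + ω (ι₁ R x.2.1) (ι₂ R y.2.2)
      + ω (ι₂ R x.2.2) (ι₁ R y.2.1) + ω (ι₂ R x.2.2) (ι₂ R y.2.2) := by
  have h10 : ∀ a b, ω (ι₁ R a) (ι₀ R b) = 0 := fun a b => hω.eq_iff.mp (h01 b a)
  have h20 : ∀ a b, ω (ι₂ R a) (ι₀ R b) = 0 := fun a b => hω.eq_iff.mp (h02 b a)
  conv_lhs => rw [eq_ι₀_add_ι₁_add_ι₂ R x, eq_ι₀_add_ι₁_add_ι₂ R y]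
  simp only [map_add, LinearMap.add_apply, h01, h10, h11, h02, h20]
  ring

end Expansion

section BlockMap

variable {V₀ V₁ V₂ : Type*} [AddCommGroup V₀] [Module ℝ V₀]
  [AddCommGroup V₁] [Module ℝ V₁] [AddCommGroup V₂] [Module ℝ V₂]
  (Ψ₀₀ : V₀ →ₗ[ℝ] V₀) (Ψ₀₂ : V₂ →ₗ[ℝ] V₀) (Ψ₁₀ : V₀ →ₗ[ℝ] V₁)
  (Ψ₁₁ : V₁ →ₗ[ℝ] V₁) (Ψ₁₂ : V₂ →ₗ[ℝ] V₁) (Ψ₂₂ : V₂ →ₗ[ℝ] V₂)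

def blockMapₗ (t : ℝ) : (V₀ × V₁ × V₂) →ₗ[ℝ] V₀ × V₁ × V₂ where
  toFun := blockMap Ψ₀₀ Ψ₀₂ Ψ₁₀ Ψ₁₁ Ψ₁₂ Ψ₂₂ t
  map_add' v w := by
    ext <;> simp only [blockMap, Prod.fst_add, Prod.snd_add, map_add] <;> module
  map_smul' c v := by
    ext <;> simp only [blockMap, Prod.smul_fst, Prod.smul_snd, map_smul, RingHom.id_apply] <;>
      module

theorem coe_blockMapₗ (t : ℝ) :
    ⇑(blockMapₗ Ψ₀₀ Ψ₀₂ Ψ₁₀ Ψ₁₁ Ψ₁₂ Ψ₂₂ t) = blockMap Ψ₀₀ Ψ₀₂ Ψ₁₀ Ψ₁₁ Ψ₁₂ Ψ₂₂ t :=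
  rfl

variable {Ψ₀₀ Ψ₀₂ Ψ₁₀ Ψ₁₁ Ψ₁₂ Ψ₂₂} {ω : (V₀ × V₁ × V₂) →ₗ[ℝ] (V₀ × V₁ × V₂) →ₗ[ℝ] ℝ}

theorem blockMap_form_eq_blockMap_zero (hω : ω.IsAlt)
    (h01 : ∀ a b, ω (ι₀ ℝ a) (ι₁ ℝ b) = 0) (h11 : ∀ a b, ω (ι₁ ℝ a) (ι₁ ℝ b) = 0)
    (h02 : ∀ a b, ω (ι₀ ℝ a) (ι₂ ℝ b) = 0)
    (hid1 : ∀ v₀ w₂,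
      ω (ι₀ ℝ (Ψ₀₀ v₀)) (ι₀ ℝ (Ψ₀₂ w₂)) + ω (ι₁ ℝ (Ψ₁₀ v₀)) (ι₂ ℝ (Ψ₂₂ w₂)) = 0)
    (hid2 : ∀ v₂ w₂,
      ω (ι₀ ℝ (Ψ₀₂ v₂)) (ι₀ ℝ (Ψ₀₂ w₂)) + ω (ι₁ ℝ (Ψ₁₂ v₂)) (ι₂ ℝ (Ψ₂₂ w₂))
        + ω (ι₂ ℝ (Ψ₂₂ v₂)) (ι₁ ℝ (Ψ₁₂ w₂)) = 0)
    (t : ℝ) (v w : V₀ × V₁ × V₂) :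
    ω (blockMap Ψ₀₀ Ψ₀₂ Ψ₁₀ Ψ₁₁ Ψ₁₂ Ψ₂₂ t v) (blockMap Ψ₀₀ Ψ₀₂ Ψ₁₀ Ψ₁₁ Ψ₁₂ Ψ₂₂ t w)
      = ω (blockMap Ψ₀₀ Ψ₀₂ Ψ₁₀ Ψ₁₁ Ψ₁₂ Ψ₂₂ 0 v) (blockMap Ψ₀₀ Ψ₀₂ Ψ₁₀ Ψ₁₁ Ψ₁₂ Ψ₂₂ 0 w) := by
  rw [hω.apply_eq_sum_blocks h01 h11 h02 (blockMap _ _ _ _ _ _ t v),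
    hω.apply_eq_sum_blocks h01 h11 h02 (blockMap _ _ _ _ _ _ 0 v)]
  simp only [blockMap, map_add, map_smul, LinearMap.add_apply, LinearMap.smul_apply, smul_eq_mul,
    zero_smul, map_zero, LinearMap.zero_apply]
  linear_combination t * hid1 v.1 w.2.2 - t * hid1 w.1 v.2.2 + t ^ 2 * hid2 v.2.2 w.2.2
    - t * hω.neg (ι₀ ℝ (Ψ₀₀ w.1)) (ι₀ ℝ (Ψ₀₂ v.2.2))
    - t * hω.neg (ι₁ ℝ (Ψ₁₀ w.1)) (ι₂ ℝ (Ψ₂₂ v.2.2))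

end BlockMap

theorem LinearMap.bijective_of_separatingLeft_of_apply_map_map_eq {K M : Type*} [Field K]
    [AddCommGroup M] [Module K M] [FiniteDimensional K M] {ω : M →ₗ[K] M →ₗ[K] K}
    (hω : ω.SeparatingLeft) {f : M →ₗ[K] M} (hf : ∀ v w, ω (f v) (f w) = ω v w) :
    Function.Bijective f := by
  have hinj : Function.Injective f := by
    rw [← LinearMap.ker_eq_bot, LinearMap.ker_eq_bot']
    intro v hv
    refine hω v fun w => ?_
    rw [← hf, hv, map_zero, LinearMap.zero_apply]
  exact ⟨hinj, LinearMap.injective_iff_surjective.mp hinj⟩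

theorem stmt10_general {V₀ V₁ V₂ : Type*} [AddCommGroup V₀] [Module ℝ V₀]
    [AddCommGroup V₁] [Module ℝ V₁] [AddCommGroup V₂] [Module ℝ V₂]
    [FiniteDimensional ℝ V₀] [FiniteDimensional ℝ V₁] [FiniteDimensional ℝ V₂]
    (ω : (V₀ × V₁ × V₂) →ₗ[ℝ] (V₀ × V₁ × V₂) →ₗ[ℝ] ℝ)
    (halt : ∀ v, ω v v = 0)
    (hnondeg : ∀ v, (∀ w, ω v w = 0) → v = 0)
    (Ψ₀₀ : V₀ →ₗ[ℝ] V₀) (Ψ₀₂ : V₂ →ₗ[ℝ] V₀) (Ψ₁₀ : V₀ →ₗ[ℝ] V₁)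
    (Ψ₁₁ : V₁ →ₗ[ℝ] V₁) (Ψ₁₂ : V₂ →ₗ[ℝ] V₁) (Ψ₂₂ : V₂ →ₗ[ℝ] V₂)
    (h01 : ∀ (a : V₀) (b : V₁), ω (a, 0, 0) (0, b, 0) = 0)
    (h11 : ∀ a b : V₁, ω (0, a, 0) (0, b, 0) = 0)
    (h02 : ∀ (a : V₀) (b : V₂), ω (a, 0, 0) (0, 0, b) = 0)
    (hid1 : ∀ (v₀ : V₀) (w₂ : V₂),
      ω (Ψ₀₀ v₀, 0, 0) (Ψ₀₂ w₂, 0, 0) + ω (0, Ψ₁₀ v₀, 0) (0, 0, Ψ₂₂ w₂) = 0)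
    (hid2 : ∀ v₂ w₂ : V₂,
      ω (Ψ₀₂ v₂, 0, 0) (Ψ₀₂ w₂, 0, 0) + ω (0, Ψ₁₂ v₂, 0) (0, 0, Ψ₂₂ w₂)
        + ω (0, 0, Ψ₂₂ v₂) (0, Ψ₁₂ w₂, 0) = 0)
    (hΨsymp : ∀ v w : V₀ × V₁ × V₂,
      ω (blockMap Ψ₀₀ Ψ₀₂ Ψ₁₀ Ψ₁₁ Ψ₁₂ Ψ₂₂ 1 v) (blockMap Ψ₀₀ Ψ₀₂ Ψ₁₀ Ψ₁₁ Ψ₁₂ Ψ₂₂ 1 w)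
        = ω v w) :
    ∀ t : ℝ,
      (∀ v w : V₀ × V₁ × V₂,
        ω (blockMap Ψ₀₀ Ψ₀₂ Ψ₁₀ Ψ₁₁ Ψ₁₂ Ψ₂₂ t v) (blockMap Ψ₀₀ Ψ₀₂ Ψ₁₀ Ψ₁₁ Ψ₁₂ Ψ₂₂ t w)
          = ω v w) ∧
      Function.Bijective (blockMap Ψ₀₀ Ψ₀₂ Ψ₁₀ Ψ₁₁ Ψ₁₂ Ψ₂₂ t) := by
  intro t
  have h_indep := blockMap_form_eq_blockMap_zero (Ψ₁₁ := Ψ₁₁) halt h01 h11 h02 hid1 hid2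
  have hsymp : ∀ v w, ω (blockMap Ψ₀₀ Ψ₀₂ Ψ₁₀ Ψ₁₁ Ψ₁₂ Ψ₂₂ t v)
      (blockMap Ψ₀₀ Ψ₀₂ Ψ₁₀ Ψ₁₁ Ψ₁₂ Ψ₂₂ t w) = ω v w := fun v w => by
    rw [h_indep, ← h_indep 1, hΨsymp]
  refine ⟨hsymp, ?_⟩
  rw [← coe_blockMapₗ]
  exact LinearMap.bijective_of_separatingLeft_of_apply_map_map_eq hnondeg hsymp

/-- Let `(V, ω)` with `V = V₀ ⊕ V₁ ⊕ V₂` be a finite dimensional symplectic vector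
space and `Ψ` a symplectic automorphism with block form
`[[Ψ₀₀, 0, Ψ₀₂], [Ψ₁₀, Ψ₁₁, Ψ₁₂], [0, 0, Ψ₂₂]]` (that is, `Ψ = Ψ^1 = blockMap ... 1`).
Assume `ω` vanishes on `V₀ × V₁`, on `V₁ × V₁` and on `V₀ × V₂`, so that
`ω(Ψ₀₀v₀, Ψ₀₂w₂) + ω(Ψ₁₀v₀, Ψ₂₂w₂) = 0` and
`ω(Ψ₀₂v₂, Ψ₀₂w₂) + ω(Ψ₁₂v₂, Ψ₂₂w₂) + ω(Ψ₂₂v₂, Ψ₁₂w₂) = 0`.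
Then for every `t ∈ ℝ` the map `Ψ^t` is again a symplectic automorphism of `(V, ω)`. -/
theorem stmt10 {V₀ V₁ V₂ : Type*} [AddCommGroup V₀] [Module ℝ V₀]
    [AddCommGroup V₁] [Module ℝ V₁] [AddCommGroup V₂] [Module ℝ V₂]
    [FiniteDimensional ℝ V₀] [FiniteDimensional ℝ V₁] [FiniteDimensional ℝ V₂]
    (ω : (V₀ × V₁ × V₂) →ₗ[ℝ] (V₀ × V₁ × V₂) →ₗ[ℝ] ℝ)
    (halt : ∀ v, ω v v = 0)
    (hnondeg : ∀ v, (∀ w, ω v w = 0) → v = 0)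
    (Ψ₀₀ : V₀ →ₗ[ℝ] V₀) (Ψ₀₂ : V₂ →ₗ[ℝ] V₀) (Ψ₁₀ : V₀ →ₗ[ℝ] V₁)
    (Ψ₁₁ : V₁ →ₗ[ℝ] V₁) (Ψ₁₂ : V₂ →ₗ[ℝ] V₁) (Ψ₂₂ : V₂ →ₗ[ℝ] V₂)
    (h01 : ∀ (a : V₀) (b : V₁), ω (a, 0, 0) (0, b, 0) = 0)
    (h11 : ∀ a b : V₁, ω (0, a, 0) (0, b, 0) = 0)
    (h02 : ∀ (a : V₀) (b : V₂), ω (a, 0, 0) (0, 0, b) = 0)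
    (hid1 : ∀ (v₀ : V₀) (w₂ : V₂),
      ω (Ψ₀₀ v₀, 0, 0) (Ψ₀₂ w₂, 0, 0) + ω (0, Ψ₁₀ v₀, 0) (0, 0, Ψ₂₂ w₂) = 0)
    (hid2 : ∀ v₂ w₂ : V₂,
      ω (Ψ₀₂ v₂, 0, 0) (Ψ₀₂ w₂, 0, 0) + ω (0, Ψ₁₂ v₂, 0) (0, 0, Ψ₂₂ w₂)
        + ω (0, 0, Ψ₂₂ v₂) (0, Ψ₁₂ w₂, 0) = 0)
    (hΨsymp : ∀ v w : V₀ × V₁ × V₂,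
      ω (blockMap Ψ₀₀ Ψ₀₂ Ψ₁₀ Ψ₁₁ Ψ₁₂ Ψ₂₂ 1 v) (blockMap Ψ₀₀ Ψ₀₂ Ψ₁₀ Ψ₁₁ Ψ₁₂ Ψ₂₂ 1 w)
        = ω v w)
    (hΨbij : Function.Bijective (blockMap Ψ₀₀ Ψ₀₂ Ψ₁₀ Ψ₁₁ Ψ₁₂ Ψ₂₂ 1)) :
    ∀ t : ℝ,
      (∀ v w : V₀ × V₁ × V₂,
        ω (blockMap Ψ₀₀ Ψ₀₂ Ψ₁₀ Ψ₁₁ Ψ₁₂ Ψ₂₂ t v) (blockMap Ψ₀₀ Ψ₀₂ Ψ₁₀ Ψ₁₁ Ψ₁₂ Ψ₂₂ t w)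
          = ω v w) ∧
      Function.Bijective (blockMap Ψ₀₀ Ψ₀₂ Ψ₁₀ Ψ₁₁ Ψ₁₂ Ψ₂₂ t) :=
  stmt10_general ω halt hnondeg Ψ₀₀ Ψ₀₂ Ψ₁₀ Ψ₁₁ Ψ₁₂ Ψ₂₂ h01 h11 h02 hid1 hid2 hΨsymp
end
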